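/- For every ε with 0 < ε < 1 there exists N such that for every odd integer n ≥ N and every integer ξ with n/log(n) ≤ ξ < n/2, the smallest eigenvalue β_*(ξ) of M(ξ) satisfies β_*(ξ) ≥ −1 + (3/4)·(1−ε)·(ξ/n)². (Here log denotes the natural logarithm.) -/

import Mathlib

/-
With `x = ξ / n`, `θ_j = 2πξj/n`, `c = -1 + 3/4 x²` and `P_j = 2 - 3/2 x² + cos θ_j`, reindexing
the cyclic sums gives `vᵀ M v - c ‖v‖² = 1/4 ∑_j (P_j v_j² + P_{j+1} v_{j+1}² + 2 v_j v_{j+1})`.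
Each summand is nonnegative as soon as `P_j P_{j+1} ≥ 1`. Since `θ_{j+1} ≡ θ_j + 2πx`, writing
`θ_j, θ_{j+1} = φ ∓ πx` turns the product into a quadratic in `cos φ`, which stays `≥ 1` on
`[-1, 1]` thanks to Jordan's bound `cos πx ≤ 1 - 2x²` for `0 ≤ x ≤ 1/2`. So the Rayleigh quotient,
hence every eigenvalue, is at least `c`.
-/

/-- The `n×n` real symmetric matrix `M(ξ)` with `(j,j)` entry `(1/2)·cos(2πξj/n)`,
entries `1/4` for `k ≡ j ± 1 (mod n)` (including the corners), and `0` elsewhere. -/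
noncomputable def Mmat (n : ℕ) (ξ : ℤ) : Matrix (Fin n) (Fin n) ℝ :=
  Matrix.of fun j k =>
    if k = j then (1/2) * Real.cos (2 * Real.pi * (ξ : ℝ) * ((j : ℕ) : ℝ) / (n : ℝ))
    else if ((k : ℕ) : ZMod n) = ((j : ℕ) : ZMod n) + 1 ∨
        ((k : ℕ) : ZMod n) = ((j : ℕ) : ZMod n) - 1 then 1/4
    else 0

open Real Finset Matrix

lemma nonneg_quadratic_of_one_le_mul {P Q : ℝ} (hP : 0 ≤ P) (hPQ : 1 ≤ P * Q) (a b : ℝ) :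
    0 ≤ P * a ^ 2 + Q * b ^ 2 + 2 * a * b := by
  have hP : 0 < P := lt_of_le_of_ne hP fun h => by simp [← h] at hPQ; linarith
  refine nonneg_of_mul_nonneg_right ?_ hP
  nlinarith [sq_nonneg (P * a + b), mul_nonneg (sub_nonneg.2 hPQ) (sq_nonneg b)]

theorem mul_sum_sq_le_sum_cyclic {G : Type*} [AddGroup G] [Fintype G] (g : G) (a v : G → ℝ)
    {c : ℝ} (hc : ∀ j, c ≤ a j) (hprod : ∀ j, 1 ≤ (2 * (a j - c)) * (2 * (a (j + g) - c))) :
    c * ∑ j, v j ^ 2 ≤ ∑ j, (a j * v j ^ 2 + v j * v (j + g) / 2) := by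
  set P : G → ℝ := fun j => 2 * (a j - c)
  have hshift : ∑ j, P (j + g) * v (j + g) ^ 2 = ∑ j, P j * v j ^ 2 :=
    Equiv.sum_comp (Equiv.addRight g) fun j => P j * v j ^ 2
  have hsplit : ∑ j, (P j * v j ^ 2 + P (j + g) * v (j + g) ^ 2 + 2 * v j * v (j + g)) / 4
      = ∑ j, (a j * v j ^ 2 + v j * v (j + g) / 2) - c * ∑ j, v j ^ 2 := by
    rw [← sum_div, sum_add_distrib, sum_add_distrib, hshift, ← sum_add_distrib,
      ← sum_add_distrib, sum_div, mul_sum, ← sum_sub_distrib]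
    exact sum_congr rfl fun j _ => by simp only [P]; ring
  have := sum_nonneg fun j (_ : j ∈ univ) => div_nonneg
    (nonneg_quadratic_of_one_le_mul (by linarith [hc j]) (hprod j) (v j) (v (j + g))) zero_le_four
  linarith

-- The vertex `c = -m C` of this quadratic in `c` lies in `[-1, 1]` exactly when `m C ≤ 1`.
lemma one_le_sq_add_mul_sub_mul {m c C : ℝ} (hc : -1 ≤ c) (hC : 0 ≤ C) (hm : 1 + C ≤ m)
    (hm2 : m + 1 ≤ m ^ 2) : 1 ≤ (m + c * C) ^ 2 - (1 - c ^ 2) * (1 - C ^ 2) := by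
  rcases le_total (m * C) 1 with h | h
  · nlinarith [sq_nonneg (c + m * C), mul_nonneg hC (sub_nonneg.2 h)]
  · nlinarith [mul_nonneg (neg_le_iff_add_nonneg.1 hc) (by linarith : 0 ≤ c + 2 * m * C - 1)]

lemma add_cos_sub_mul_add_cos_add (m φ y : ℝ) :
    (m + cos (φ - y)) * (m + cos (φ + y))
      = (m + cos φ * cos y) ^ 2 - (1 - cos φ ^ 2) * (1 - cos y ^ 2) := by
  rw [cos_sub, cos_add, ← sin_sq, ← sin_sq]; ring

lemma one_le_add_cos_mul_add_cos_add {x : ℝ} (hx0 : 0 ≤ x) (hx : x ≤ 1 / 2) (θ : ℝ) :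
    1 ≤ (2 - 3 / 2 * x ^ 2 + cos θ) * (2 - 3 / 2 * x ^ 2 + cos (θ + 2 * π * x)) := by
  have hπx : π * x ≤ π / 2 := by nlinarith [pi_pos]
  have hx2 : x ^ 2 ≤ 1 / 4 := by nlinarith
  have hC : 0 ≤ cos (π * x) :=
    cos_nonneg_of_mem_Icc ⟨by linarith [mul_nonneg pi_pos.le hx0], hπx⟩
  have hJordan : cos (π * x) ≤ 1 - 2 * x ^ 2 := by
    have := cos_le_one_sub_mul_cos_sq (x := π * x) (by
      rw [abs_of_nonneg (mul_nonneg pi_pos.le hx0)]; linarith [pi_pos])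
    rwa [mul_pow, ← mul_assoc, div_mul_cancel₀ _ (pow_ne_zero 2 pi_ne_zero)] at this
  have h := add_cos_sub_mul_add_cos_add (2 - 3 / 2 * x ^ 2) (θ + π * x) (π * x)
  rw [add_sub_cancel_right, show θ + π * x + π * x = θ + 2 * π * x by ring] at h
  rw [h]
  exact one_le_sq_add_mul_sub_mul (neg_one_le_cos _) hC (by nlinarith)
    (by nlinarith [sq_nonneg (x ^ 2 - 1 / 4)])

lemma cos_two_pi_mul_mod_div (ξ : ℤ) (k n : ℕ) :
    cos (2 * π * ξ * (k % n : ℕ) / n) = cos (2 * π * ξ * k / n) := by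
  rcases eq_or_ne n 0 with rfl | hn
  · simp
  have hk : (k : ℝ) = (k % n : ℕ) + n * (k / n : ℕ) := by
    exact_mod_cast (Nat.mod_add_div k n).symm
  have harg :
      2 * π * ξ * k / n = 2 * π * ξ * (k % n : ℕ) / n + (ξ * (k / n : ℕ) : ℤ) * (2 * π) := by
    rw [Int.cast_mul, Int.cast_natCast, hk]; field_simp
  rw [harg, cos_add_int_mul_two_pi]

lemma Fin.natCast_val_eq_finEquiv {n : ℕ} [NeZero n] (j : Fin n) :
    ((j : ℕ) : ZMod n) = ZMod.finEquiv n j := by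
  obtain ⟨m, rfl⟩ := Nat.exists_eq_succ_of_ne_zero (NeZero.ne n)
  exact Fin.cast_val_eq_self j

section Mmat

variable {n : ℕ} [NeZero n]

lemma Mmat_apply (ξ : ℤ) (j k : Fin n) :
    Mmat n ξ j k = if k = j then 1 / 2 * cos (2 * π * ξ * j / n)
      else if k = j + 1 ∨ k = j - 1 then 1 / 4 else 0 := by
  simp only [Mmat, of_apply, Fin.natCast_val_eq_finEquiv, ← map_one (ZMod.finEquiv n),
    ← map_add, ← map_sub, (ZMod.finEquiv n).injective.eq_iff]

lemma cos_two_pi_mul_val_add_one_div (ξ : ℤ) (j : Fin n) :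
    cos (2 * π * ξ * (j + 1 : Fin n) / n) = cos (2 * π * ξ * j / n + 2 * π * (ξ / n)) := by
  rw [Fin.val_add, Fin.val_one', Nat.add_mod_mod, cos_two_pi_mul_mod_div]
  push_cast; ring_nf

variable (hn : 3 ≤ n)
include hn

lemma Mmat_mulVec (ξ : ℤ) (v : Fin n → ℝ) (j : Fin n) :
    (Mmat n ξ *ᵥ v) j = 1 / 2 * cos (2 * π * ξ * j / n) * v j + (v (j + 1) + v (j - 1)) / 4 := by
  have h1 : (1 : Fin n) ≠ 0 := by simp [Fin.ext_iff, Nat.mod_eq_of_lt (show 1 < n by omega)]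
  have h2 : (1 + 1 : Fin n) ≠ 0 := by
    simp [Fin.ext_iff, Fin.val_add, Nat.mod_eq_of_lt (show 1 < n by omega),
      Nat.mod_eq_of_lt (show 2 < n by omega)]
  have h3 : j + 1 ≠ j - 1 := by rwa [ne_eq, ← sub_eq_zero, add_sub_sub_cancel]
  have hrow : ∀ k, Mmat n ξ j k = (if k = j then 1 / 2 * cos (2 * π * ξ * j / n) else 0)
      + (if k = j + 1 then 1 / 4 else 0) + (if k = j - 1 then 1 / 4 else 0) := by
    intro k; rw [Mmat_apply]; split_ifs <;> simp_all
  simp only [mulVec, dotProduct, hrow, add_mul, ite_mul, zero_mul, sum_add_distrib,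
    sum_ite_eq', mem_univ, if_true]
  ring

lemma dotProduct_Mmat_mulVec (ξ : ℤ) (v : Fin n → ℝ) :
    v ⬝ᵥ (Mmat n ξ *ᵥ v)
      = ∑ j : Fin n, (1 / 2 * cos (2 * π * ξ * (j : ℕ) / n) * v j ^ 2 + v j * v (j + 1) / 2) := by
  have hshift : ∑ j, v j * v (j - 1) = ∑ j, v j * v (j + 1) := by
    rw [← Equiv.sum_comp (Equiv.addRight 1)]
    simp [mul_comm]
  calc v ⬝ᵥ (Mmat n ξ *ᵥ v)
      = ∑ j : Fin n, (1 / 2 * cos (2 * π * ξ * (j : ℕ) / n) * v j ^ 2 + v j * v (j + 1) / 4)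
        + (∑ j, v j * v (j - 1)) / 4 := by
        rw [sum_div, ← sum_add_distrib]
        exact sum_congr rfl fun j _ => by rw [Mmat_mulVec hn]; ring
    _ = _ := by
        rw [hshift, sum_div, ← sum_add_distrib]
        exact sum_congr rfl fun j _ => by ring

theorem le_dotProduct_Mmat_mulVec (ξ : ℤ) (hx0 : 0 ≤ (ξ : ℝ) / n)
    (hx : (ξ : ℝ) / n ≤ 1 / 2) (v : Fin n → ℝ) :
    (-1 + 3 / 4 * ((ξ : ℝ) / n) ^ 2) * (v ⬝ᵥ v) ≤ v ⬝ᵥ (Mmat n ξ *ᵥ v) := by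
  rw [dotProduct_Mmat_mulVec hn, dotProduct]
  simp only [← sq]
  refine mul_sum_sq_le_sum_cyclic 1 (fun j : Fin n => 1 / 2 * cos (2 * π * ξ * (j : ℕ) / n)) v
    (fun j => ?_) (fun j => ?_)
  · nlinarith [neg_one_le_cos (2 * π * ξ * j / n)]
  · calc 1 ≤ _ := one_le_add_cos_mul_add_cos_add hx0 hx (2 * π * ξ * j / n)
      _ = _ := by rw [cos_two_pi_mul_val_add_one_div]; ring

end Mmat

theorem Matrix.le_of_mem_spectrum_of_forall_le_dotProduct_mulVec {ι R : Type*} [Fintype ι]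
    [DecidableEq ι] [Field R] [LinearOrder R] [IsStrictOrderedRing R] {A : Matrix ι ι R} {c : R}
    (h : ∀ v, c * (v ⬝ᵥ v) ≤ v ⬝ᵥ (A *ᵥ v)) {β : R} (hβ : β ∈ spectrum R A) : c ≤ β := by
  rw [← spectrum_toLin', ← Module.End.hasEigenvalue_iff_mem_spectrum] at hβ
  obtain ⟨v, hv⟩ := hβ.exists_hasEigenvector
  have hAv : A *ᵥ v = β • v := by simpa [toLin'_apply] using hv.apply_eq_smul
  have hpos : 0 < v ⬝ᵥ v := lt_of_le_of_ne (sum_nonneg fun i _ => mul_self_nonneg (v i))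
    (Ne.symm (dotProduct_self_eq_zero.not.2 hv.2))
  have := h v
  rw [hAv, dotProduct_smul, smul_eq_mul] at this
  exact le_of_mul_le_mul_right this hpos

/-- For every `0 < ε < 1` there is an `N` such that for every odd `n ≥ N` and every
`ξ` with `n / log n ≤ ξ < n/2`, the smallest eigenvalue of `M(ξ)` is at least
`-1 + (3/4)(1-ε)(ξ/n)²`; equivalently every eigenvalue `β` of `M(ξ)` satisfies
`β ≥ -1 + (3/4)(1-ε)(ξ/n)²`. -/
theorem Mmat_bottom_eigenvalue_bound_large_xi :
    ∀ ε : ℝ, 0 < ε → ε < 1 → ∃ N : ℕ,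
      ∀ n : ℕ, Odd n → N ≤ n → ∀ ξ : ℕ,
        (n : ℝ) / Real.log n ≤ (ξ : ℝ) → (ξ : ℝ) < (n : ℝ) / 2 →
        ∀ β ∈ spectrum ℝ (Mmat n (ξ : ℤ)),
          -1 + (3/4) * (1 - ε) * ((ξ : ℝ) / (n : ℝ)) ^ 2 ≤ β := by
  intro ε hε _
  refine ⟨3, fun n _ hn ξ _ hξ β hβ => ?_⟩
  have : NeZero n := ⟨by omega⟩
  have hn0 : (0 : ℝ) < n := by exact_mod_cast (by omega : 0 < n)
  have hx0 : 0 ≤ ((ξ : ℤ) : ℝ) / n := by positivity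
  have hx : ((ξ : ℤ) : ℝ) / n ≤ 1 / 2 := by rw [Int.cast_natCast, div_le_iff₀ hn0]; linarith
  have hβ' := le_of_mem_spectrum_of_forall_le_dotProduct_mulVec
    (le_dotProduct_Mmat_mulVec hn _ hx0 hx) hβ
  push_cast at hβ'
  nlinarith [mul_nonneg hε.le (sq_nonneg ((ξ : ℝ) / n))]
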